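/- The real span of {i·P(a) : wt(a) odd} is a real Lie subalgebra of the skew-Hermitian 2^n × 2^n matrices: it is closed under the commutator bracket. -/
import Mathlib


open Matrix Complex

noncomputable def pauli : Fin 4 → Matrix (Fin 2) (Fin 2) ℂ
  | 0 => 1
  | 1 => !![0, 1; 1, 0]
  | 2 => !![0, -I; I, 0]
  | 3 => !![1, 0; 0, -1]

/-- Tensor product of Pauli matrices indexed by `a : Fin n → Fin 4`. -/
noncomputable def PauliProd {n : ℕ} (a : Fin n → Fin 4) :
    Matrix (Fin n → Fin 2) (Fin n → Fin 2) ℂ :=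
  Matrix.of fun i j => ∏ k, pauli (a k) (i k) (j k)

/-- Weight: the number of non-identity tensor factors. -/
noncomputable def wt {n : ℕ} (a : Fin n → Fin 4) : ℕ :=
  (Finset.univ.filter fun i => a i ≠ 0).card

/-- Support: the set of qubits on which the Pauli product acts nontrivially. -/
noncomputable def supp {n : ℕ} (a : Fin n → Fin 4) : Finset (Fin n) :=
  Finset.univ.filter fun i => a i ≠ 0

def pm : Fin 4 → Fin 4 → Fin 4 := ![![0,1,2,3], ![1,0,3,2], ![2,3,0,1], ![3,2,1,0]]
noncomputable def pc : Fin 4 → Fin 4 → ℂ := ![![1,1,1,1], ![1,1,I,-I], ![1,-I,1,I], ![1,I,-I,1]]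

lemma pauli_mul (x y : Fin 4) : pauli x * pauli y = pc x y • pauli (pm x y) := by
  fin_cases x <;> fin_cases y <;>
  · ext i j
    fin_cases i <;> fin_cases j <;>
      simp [pauli, pc, pm, Matrix.mul_apply, Fin.sum_univ_two, Matrix.vecHead, Matrix.vecTail]

lemma pm_comm (x y : Fin 4) : pm y x = pm x y := by revert x y; decide

lemma pc_swap (x y : Fin 4) :
    pc y x = (if x ≠ 0 ∧ y ≠ 0 ∧ x ≠ y then -1 else 1) * pc x y := by
  fin_cases x <;> fin_cases y <;>
    simp [pc, Matrix.vecHead, Matrix.vecTail]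

lemma pc_one (x y : Fin 4) (h : ¬(x ≠ 0 ∧ y ≠ 0 ∧ x ≠ y)) : pc x y = 1 := by
  fin_cases x <;> fin_cases y <;> simp_all [pc, Matrix.vecHead, Matrix.vecTail]

lemma pc_im (x y : Fin 4) (h : x ≠ 0 ∧ y ≠ 0 ∧ x ≠ y) : pc x y = I ∨ pc x y = -I := by
  fin_cases x <;> fin_cases y <;> simp_all [pc, Matrix.vecHead, Matrix.vecTail]

lemma PauliProd_mul {n : ℕ} (a b : Fin n → Fin 4) :
    PauliProd a * PauliProd b
      = (∏ k, pc (a k) (b k)) • PauliProd (fun k => pm (a k) (b k)) := by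
  ext i j
  simp only [Matrix.mul_apply, PauliProd, Matrix.of_apply, Matrix.smul_apply, smul_eq_mul]
  have : ∀ f : Fin n → Fin 2,
      (∏ k, pauli (a k) (i k) (f k)) * ∏ k, pauli (b k) (f k) (j k)
        = ∏ k, pauli (a k) (i k) (f k) * pauli (b k) (f k) (j k) := fun f =>
    (Finset.prod_mul_distrib).symm
  simp_rw [this]
  rw [← Fintype.piFinset_univ,
    ← Finset.prod_univ_sum (t := fun _ : Fin n => (Finset.univ : Finset (Fin 2)))
      (f := fun k m => pauli (a k) (i k) m * pauli (b k) m (j k))]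
  rw [← Finset.prod_mul_distrib]
  refine Finset.prod_congr rfl fun k _ => ?_
  have := congrFun (congrFun (pauli_mul (a k) (b k)) (i k)) (j k)
  simpa [Matrix.mul_apply, Matrix.smul_apply] using this

lemma real_smul_matrix {m : Type*} (x : ℝ) (M : Matrix m m ℂ) : x • M = (x : ℂ) • M := by
  ext i j; simp [Complex.real_smul]

lemma wt_key (x y : Fin 4) :
    (if pm x y ≠ 0 then 1 else 0) + 2 * (if x ≠ 0 ∧ y ≠ 0 then 1 else 0)
      = ((if x ≠ 0 then 1 else 0) + (if y ≠ 0 then 1 else 0))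
        + (if x ≠ 0 ∧ y ≠ 0 ∧ x ≠ y then 1 else 0) := by
  revert x y; decide

lemma wt_parity {n : ℕ} (a b : Fin n → Fin 4) :
    wt (fun k => pm (a k) (b k))
        + 2 * (Finset.univ.filter fun k => a k ≠ 0 ∧ b k ≠ 0).card
      = (wt a + wt b)
        + (Finset.univ.filter fun k => a k ≠ 0 ∧ b k ≠ 0 ∧ a k ≠ b k).card := by
  simp only [wt, Finset.card_filter, ← Finset.sum_add_distrib, Finset.mul_sum]
  exact Finset.sum_congr rfl fun k _ => wt_key (a k) (b k)

lemma pc_prod_swap {n : ℕ} (a b : Fin n → Fin 4) :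
    (∏ k, pc (b k) (a k))
      = (-1 : ℂ) ^ (Finset.univ.filter fun k => a k ≠ 0 ∧ b k ≠ 0 ∧ a k ≠ b k).card
        * ∏ k, pc (a k) (b k) := by
  have h : ∀ k : Fin n, pc (b k) (a k)
      = (if a k ≠ 0 ∧ b k ≠ 0 ∧ a k ≠ b k then -1 else 1) * pc (a k) (b k) :=
    fun k => pc_swap (a k) (b k)
  simp_rw [h]
  rw [Finset.prod_mul_distrib, Finset.prod_ite, Finset.prod_const, Finset.prod_const,
    one_pow, mul_one]

lemma pc_prod_imaginary {n : ℕ} (a b : Fin n → Fin 4)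
    (hodd : Odd (Finset.univ.filter fun k => a k ≠ 0 ∧ b k ≠ 0 ∧ a k ≠ b k).card) :
    ∃ r : ℝ, (∏ k, pc (a k) (b k)) = (r : ℂ) * I := by
  classical
  set D := (Finset.univ.filter fun k => a k ≠ 0 ∧ b k ≠ 0 ∧ a k ≠ b k) with hD
  obtain ⟨m, hm⟩ := hodd
  set e : Fin n → ℝ := fun k => if pc (a k) (b k) = I then 1 else -1 with he
  refine ⟨(∏ k ∈ D, e k) * (-1) ^ m, ?_⟩
  rw [← Finset.prod_filter_mul_prod_filter_not Finset.univ
    (fun k => a k ≠ 0 ∧ b k ≠ 0 ∧ a k ≠ b k)]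
  have h2 : ∏ k ∈ Finset.univ.filter (fun k => ¬(a k ≠ 0 ∧ b k ≠ 0 ∧ a k ≠ b k)),
      pc (a k) (b k) = 1 := by
    refine Finset.prod_eq_one fun k hk => ?_
    exact pc_one _ _ (Finset.mem_filter.mp hk).2
  rw [h2, mul_one]
  have h1 : ∀ k ∈ D, pc (a k) (b k) = ((e k : ℂ)) * I := by
    intro k hk
    have hne : (-I : ℂ) ≠ I := by
      intro hh
      have := congrArg Complex.im hh
      norm_num at this
    rcases pc_im (a k) (b k) (by simpa [hD] using hk) with h | h <;> simp [he, h, hne]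
  rw [Finset.prod_congr rfl h1, Finset.prod_mul_distrib, Finset.prod_const, hm]
  have : (I : ℂ) ^ (2 * m + 1) = ((-1 : ℝ) ^ m : ℂ) * I := by
    rw [pow_succ, pow_mul, I_sq]; push_cast; ring
  rw [this]
  push_cast
  ring

lemma gen_bracket {n : ℕ} (a b : Fin n → Fin 4) (ha : Odd (wt a)) (hb : Odd (wt b)) :
    (I • PauliProd a) * (I • PauliProd b) - (I • PauliProd b) * (I • PauliProd a)
      ∈ Submodule.span ℝ
        {M : Matrix (Fin n → Fin 2) (Fin n → Fin 2) ℂ |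
          ∃ c : Fin n → Fin 4, Odd (wt c) ∧ M = Complex.I • PauliProd c} := by
  classical
  set c : Fin n → Fin 4 := fun k => pm (a k) (b k) with hc
  have hba : (fun k => pm (b k) (a k)) = c := funext fun k => pm_comm (a k) (b k)
  have key : (I • PauliProd a) * (I • PauliProd b) - (I • PauliProd b) * (I • PauliProd a)
      = ((∏ k, pc (b k) (a k)) - (∏ k, pc (a k) (b k))) • PauliProd c := by
    rw [smul_mul_assoc, smul_mul_assoc, mul_smul_comm, mul_smul_comm,
      PauliProd_mul a b, PauliProd_mul b a, hba, ← hc]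
    rw [smul_smul, smul_smul, smul_smul, smul_smul, sub_smul]
    ring_nf
    rw [I_sq]
    rw [neg_one_mul, neg_one_mul, neg_smul, neg_smul, sub_neg_eq_add]
    abel
  rw [key, pc_prod_swap a b]
  set D := (Finset.univ.filter fun k => a k ≠ 0 ∧ b k ≠ 0 ∧ a k ≠ b k) with hDdef
  rcases Nat.even_or_odd D.card with hev | hod
  · rw [hev.neg_one_pow, one_mul, sub_self, zero_smul]
    exact Submodule.zero_mem _
  · have hwtc : Odd (wt c) := by
      have hpar := wt_parity a b
      rw [← hDdef, ← hc] at hpar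
      rw [Nat.odd_iff] at ha hb hod ⊢
      omega
    obtain ⟨r, hr⟩ := pc_prod_imaginary a b hod
    rw [hod.neg_one_pow, hr]
    have : (-1 : ℂ) * ((r : ℂ) * I) - (r : ℂ) * I = ((-2 * r : ℝ) : ℂ) * I := by
      push_cast; ring
    rw [this, mul_smul, ← real_smul_matrix]
    exact Submodule.smul_mem _ _ (Submodule.subset_span ⟨c, hwtc, rfl⟩)


/-- The real span of i times the odd-weight Pauli products is closed under
the commutator bracket. -/
theorem odd_pauli_span_lie_closed {n : ℕ}
    (A B : Matrix (Fin n → Fin 2) (Fin n → Fin 2) ℂ)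
    (hA : A ∈ Submodule.span ℝ
      {M : Matrix (Fin n → Fin 2) (Fin n → Fin 2) ℂ |
        ∃ a : Fin n → Fin 4, Odd (wt a) ∧ M = Complex.I • PauliProd a})
    (hB : B ∈ Submodule.span ℝ
      {M : Matrix (Fin n → Fin 2) (Fin n → Fin 2) ℂ |
        ∃ a : Fin n → Fin 4, Odd (wt a) ∧ M = Complex.I • PauliProd a}) :
    A * B - B * A ∈ Submodule.span ℝ
      {M : Matrix (Fin n → Fin 2) (Fin n → Fin 2) ℂ |
        ∃ a : Fin n → Fin 4, Odd (wt a) ∧ M = Complex.I • PauliProd a} := by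
  classical
  set gen := {M : Matrix (Fin n → Fin 2) (Fin n → Fin 2) ℂ |
        ∃ a : Fin n → Fin 4, Odd (wt a) ∧ M = Complex.I • PauliProd a} with hgen
  set S := Submodule.span ℝ gen with hS
  have step1 : ∀ A' ∈ S, ∀ M ∈ gen, A' * M - M * A' ∈ S := by
    intro A' hA' M hM
    set f : Matrix (Fin n → Fin 2) (Fin n → Fin 2) ℂ →ₗ[ℝ]
        Matrix (Fin n → Fin 2) (Fin n → Fin 2) ℂ :=
      LinearMap.mulRight ℝ M - LinearMap.mulLeft ℝ M with hf
    have hsub : gen ⊆ (S.comap f : Set _) := by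
      intro x hx
      obtain ⟨a, haodd, rfl⟩ := hx
      obtain ⟨b, hbodd, rfl⟩ := hM
      simp only [Submodule.mem_comap, hf, LinearMap.sub_apply, LinearMap.mulRight_apply,
        LinearMap.mulLeft_apply]
      exact gen_bracket a b haodd hbodd
    have := (Submodule.span_le.mpr hsub) hA'
    simpa [hf, Submodule.mem_comap] using this
  set g : Matrix (Fin n → Fin 2) (Fin n → Fin 2) ℂ →ₗ[ℝ]
      Matrix (Fin n → Fin 2) (Fin n → Fin 2) ℂ :=
    LinearMap.mulLeft ℝ A - LinearMap.mulRight ℝ A with hg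
  have hsub : gen ⊆ (S.comap g : Set _) := by
    intro x hx
    simp only [Submodule.mem_comap, hg, LinearMap.sub_apply, LinearMap.mulRight_apply,
      LinearMap.mulLeft_apply, Set.mem_setOf_eq]
    exact step1 A hA x hx
  have := (Submodule.span_le.mpr hsub) hB
  simpa [hg, Submodule.mem_comap] using this
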